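/- arXiv:2109.04856 — 4 statements merged into one kernel-verified Lean document; each statement's English description precedes it below -/
import Mathlib

section
/- Let B₁,…,B_N (N ≥ 1) be nonempty finite axis sets with union B̄, and let S̄ be an extrusion generated set associated to this collection (i.e., S̄ = ⋂_{i=1}^N E[Bᵢ→B̄](Sᵢ) for some sets Sᵢ of points over Bᵢ), with projections S̄ᵢ := P[B̄→Bᵢ](S̄). Then S̄ = ⋂_{i=1}^N E[Bᵢ→B̄](S̄ᵢ). -/
/-- A point over an axis set `B` (a finite subset of `ℕ`): an assignment of a real
number to each coordinate in `B`. -/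
abbrev Pt (B : Finset ℕ) : Type := {n : ℕ // n ∈ B} → ℝ

/-- Projection (restriction) of a single point over `B₂` onto a sub-axis-set `B₁ ⊆ B₂`. -/
def projPt {B₁ B₂ : Finset ℕ} (h : B₁ ⊆ B₂) (v : Pt B₂) : Pt B₁ :=
  fun x => v ⟨x.1, h x.2⟩

/-- Projection of a set of points over `B₂` onto `B₁ ⊆ B₂`. -/
def proj {B₁ B₂ : Finset ℕ} (h : B₁ ⊆ B₂) (V : Set (Pt B₂)) : Set (Pt B₁) :=
  projPt h '' V

/-- Extrusion of a set of points over `B₁` to the larger axis set `B₂ ⊇ B₁`. -/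
def extr {B₁ B₂ : Finset ℕ} (h : B₁ ⊆ B₂) (W : Set (Pt B₁)) : Set (Pt B₂) :=
  { v | projPt h v ∈ W }

/-- The union of the axis sets `B₁, …, B_N`. -/
def Bunion {N : ℕ} (B : Fin N → Finset ℕ) : Finset ℕ :=
  Finset.univ.biUnion B

lemma subset_Bunion {N : ℕ} (B : Fin N → Finset ℕ) (i : Fin N) : B i ⊆ Bunion B :=
  Finset.subset_biUnion_of_mem B (Finset.mem_univ i)

/-- The neighbourhood `Mᵢ = {j : Bᵢ ∩ Bⱼ ≠ ∅}` of node `i`. -/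
def Mset {N : ℕ} (B : Fin N → Finset ℕ) (i : Fin N) : Finset (Fin N) :=
  Finset.univ.filter (fun j => (B i ∩ B j).Nonempty)

/-- The axis set `B_{Mᵢ} = ⋃_{j ∈ Mᵢ} Bⱼ`. -/
def BMset {N : ℕ} (B : Fin N → Finset ℕ) (i : Fin N) : Finset ℕ :=
  (Mset B i).biUnion B

lemma subset_BMset {N : ℕ} (B : Fin N → Finset ℕ) {i j : Fin N} (h : j ∈ Mset B i) :
    B j ⊆ BMset B i :=
  Finset.subset_biUnion_of_mem B h

lemma self_mem_Mset {N : ℕ} {B : Fin N → Finset ℕ} {i : Fin N} (h : (B i).Nonempty) :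
    i ∈ Mset B i :=
  Finset.mem_filter.mpr ⟨Finset.mem_univ i, by rwa [Finset.inter_self]⟩

/-! Projection and extrusion along `B₁ ⊆ B₂` are image and preimage under restriction, so
`V ⊆ E(P V)` and `P(E W) ⊆ W`. Applied to `S̄ = ⋂ᵢ E(Sᵢ)` these give `S̄ ⊆ ⋂ᵢ E(S̄ᵢ)` and
`S̄ᵢ ⊆ P(E(Sᵢ)) ⊆ Sᵢ`, hence equality. -/

section Extrusion

variable {B₁ B₂ : Finset ℕ} (h : B₁ ⊆ B₂)

lemma proj_mono : Monotone (proj h) :=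
  fun _ _ => Set.image_mono

lemma extr_mono : Monotone (extr h) :=
  fun _ _ => Set.preimage_mono

lemma subset_extr_proj (V : Set (Pt B₂)) : V ⊆ extr h (proj h V) :=
  Set.subset_preimage_image _ _

lemma proj_extr_subset (W : Set (Pt B₁)) : proj h (extr h W) ⊆ W :=
  Set.image_preimage_subset _ _

end Extrusion

theorem iInter_extr_proj_iInter_extr {ι : Type*} {B : ι → Finset ℕ} {C : Finset ℕ}
    (h : ∀ i, B i ⊆ C) (S : (i : ι) → Set (Pt (B i))) :
    ⋂ i, extr (h i) (proj (h i) (⋂ j, extr (h j) (S j))) = ⋂ j, extr (h j) (S j) := by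
  apply Set.Subset.antisymm
  · exact Set.iInter_mono fun i => extr_mono (h i) <|
      (proj_mono (h i) (Set.iInter_subset _ i)).trans (proj_extr_subset (h i) (S i))
  · exact Set.subset_iInter fun i => subset_extr_proj (h i) _

theorem extrusion_generated_eq_iInter_extr_proj_general
    {N : ℕ} (B : Fin N → Finset ℕ)
    (S : (i : Fin N) → Set (Pt (B i)))
    (Sbar : Set (Pt (Bunion B)))
    (hS : Sbar = ⋂ i, extr (subset_Bunion B i) (S i)) :
    Sbar = ⋂ i, extr (subset_Bunion B i) (proj (subset_Bunion B i) Sbar) := by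
  subst hS
  exact (iInter_extr_proj_iInter_extr (subset_Bunion B) S).symm

/-- Theorem 1, first part: an extrusion generated set is recovered
from its projections: `S̄ = ⋂ᵢ E[Bᵢ→B̄](S̄ᵢ)`. -/
theorem extrusion_generated_eq_iInter_extr_proj
    {N : ℕ} (hN : 1 ≤ N) (B : Fin N → Finset ℕ)
    (hBne : ∀ i, (B i).Nonempty)
    (S : (i : Fin N) → Set (Pt (B i)))
    (Sbar : Set (Pt (Bunion B)))
    (hS : Sbar = ⋂ i, extr (subset_Bunion B i) (S i)) :
    Sbar = ⋂ i, extr (subset_Bunion B i) (proj (subset_Bunion B i) Sbar) :=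
  extrusion_generated_eq_iInter_extr_proj_general B S Sbar hS
end

section
/- With the distributed iteration Sᵢ(κ+1) = P[B_{Mᵢ}→Bᵢ]( ⋂_{j∈Mᵢ} E[Bⱼ→B_{Mᵢ}](Sⱼ(κ)) ), started from arbitrary sets Sᵢ(0) of points over Bᵢ, for every index i and every κ ∈ ℕ one has the nested inclusions S̄ᵢ ⊆ Sᵢ(κ+1) ⊆ Sᵢ(κ), where S̄ := ⋂_{i=1}^N E[Bᵢ→B̄](Sᵢ(0)) and S̄ᵢ := P[B̄→Bᵢ](S̄). -/
/-!
Induction on `κ` shows that every point of `S̄` restricts into `Sᵢ(κ)` for all `i`: its restriction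
to `B_{Mᵢ}` witnesses that its restriction to `Bᵢ` survives the next step. Monotonicity holds
because `i ∈ Mᵢ`, so the intersection defining `Sᵢ(κ+1)` lies in the extrusion of `Sᵢ(κ)`.
-/

lemma BMset_subset_Bunion {N : ℕ} (B : Fin N → Finset ℕ) (i : Fin N) : BMset B i ⊆ Bunion B :=
  Finset.biUnion_subset.mpr fun j _ => subset_Bunion B j

section Extrusion

variable {ι : Type*} {C : ι → Finset ℕ} {D : Finset ℕ} {W : (j : ι) → Set (Pt (C j))}

lemma proj_iInter_extr_subset (hC : ∀ j, C j ⊆ D) (i : ι) :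
    proj (hC i) (⋂ j, extr (hC j) (W j)) ⊆ W i := by
  rintro _ ⟨v, hv, rfl⟩
  exact Set.mem_iInter.mp hv i

lemma projPt_mem_proj_iInter_extr {E B' : Finset ℕ} (hC : ∀ j, C j ⊆ D) (hD : D ⊆ E)
    (hB' : B' ⊆ D) {v : Pt E} (hv : ∀ j, projPt ((hC j).trans hD) v ∈ W j) :
    projPt (hB'.trans hD) v ∈ proj hB' (⋂ j, extr (hC j) (W j)) :=
  ⟨projPt hD v, Set.mem_iInter.mpr hv, rfl⟩

end Extrusion

theorem proj_subset_iterate_and_iterate_antitone_general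
    {N : ℕ} (B : Fin N → Finset ℕ)
    (hBne : ∀ i, (B i).Nonempty)
    (S : (i : Fin N) → ℕ → Set (Pt (B i)))
    (hiter : ∀ (i : Fin N) (κ : ℕ), S i (κ + 1) =
      proj (subset_BMset B (self_mem_Mset (hBne i)))
        (⋂ j : {j // j ∈ Mset B i}, extr (subset_BMset B j.2) (S j.1 κ)))
    (Sbar : Set (Pt (Bunion B)))
    (hSbar : Sbar = ⋂ i, extr (subset_Bunion B i) (S i 0)) :
    ∀ (i : Fin N) (κ : ℕ),
      proj (subset_Bunion B i) Sbar ⊆ S i (κ + 1) ∧ S i (κ + 1) ⊆ S i κ := by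
  subst hSbar
  have hBMi : ∀ i, i ∈ Mset B i := fun i => self_mem_Mset (hBne i)
  have hcentral : ∀ κ, ⋂ i, extr (subset_Bunion B i) (S i 0) ⊆
      ⋂ i, extr (subset_Bunion B i) (S i κ) := by
    intro κ
    induction κ with
    | zero => exact subset_rfl
    | succ κ ih =>
      intro v hv
      refine Set.mem_iInter.mpr fun i => ?_
      show projPt _ v ∈ S i (κ + 1)
      rw [hiter]
      exact projPt_mem_proj_iInter_extr (fun j => subset_BMset B j.2) (BMset_subset_Bunion B i)
        (subset_BMset B (hBMi i)) fun j => Set.mem_iInter.mp (ih hv) j.1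
  intro i κ
  constructor
  · exact (Set.image_mono (hcentral (κ + 1))).trans
      (proj_iInter_extr_subset (subset_Bunion B) i)
  · rw [hiter i κ]
    exact proj_iInter_extr_subset (fun j : Mset B i => subset_BMset B j.2) ⟨i, hBMi i⟩

/-- Lemma 1, point ii: along the distributed iteration, the sets are
nested and contain the centralized projections: `S̄ᵢ ⊆ Sᵢ(κ+1) ⊆ Sᵢ(κ)` for all `i, κ`. -/
theorem proj_subset_iterate_and_iterate_antitone
    {N : ℕ} (hN : 1 ≤ N) (B : Fin N → Finset ℕ)
    (hBne : ∀ i, (B i).Nonempty)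
    (S : (i : Fin N) → ℕ → Set (Pt (B i)))
    (hiter : ∀ (i : Fin N) (κ : ℕ), S i (κ + 1) =
      proj (subset_BMset B (self_mem_Mset (hBne i)))
        (⋂ j : {j // j ∈ Mset B i}, extr (subset_BMset B j.2) (S j.1 κ)))
    (Sbar : Set (Pt (Bunion B)))
    (hSbar : Sbar = ⋂ i, extr (subset_Bunion B i) (S i 0)) :
    ∀ (i : Fin N) (κ : ℕ),
      proj (subset_Bunion B i) Sbar ⊆ S i (κ + 1) ∧ S i (κ + 1) ⊆ S i κ :=
  proj_subset_iterate_and_iterate_antitone_general B hBne S hiter Sbar hSbar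
end

section
/- Let A, B, C be finite subsets of ℕ with A ⊆ B ⊆ C, let B₁,…,B_q be finite subsets of ℕ with Bⱼ ⊆ B for every j, and let Sⱼ be a set of points over Bⱼ for each j. Then projecting the intersection of extrusions taken over B agrees with projecting the intersection of extrusions taken over the larger axis set C: P[B→A]( ⋂_{j=1}^q E[Bⱼ→B](Sⱼ) ) = P[C→A]( ⋂_{j=1}^q E[Bⱼ→C](Sⱼ) ). -/
/-! Restricting to a subset of the axes is surjective on points (extend by zero), so
extruding from `B` to `C` and projecting back is the identity. Since extrusion is
transitive and commutes with intersections, the intersection over `C` is the extrusion of the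
intersection over `B`, and projecting it to `A` through `B` gives the claim. -/

section ProjExtr

variable {B₁ B₂ B₃ : Finset ℕ}

theorem projPt_surjective (h : B₁ ⊆ B₂) : Function.Surjective (projPt h) :=
  (Set.inclusion_injective (Finset.coe_subset.mpr h)).surjective_comp_right

theorem proj_trans (h₁₂ : B₁ ⊆ B₂) (h₂₃ : B₂ ⊆ B₃) (V : Set (Pt B₃)) :
    proj (h₁₂.trans h₂₃) V = proj h₁₂ (proj h₂₃ V) :=
  Set.image_comp (projPt h₁₂) (projPt h₂₃) V

theorem extr_trans (h₁₂ : B₁ ⊆ B₂) (h₂₃ : B₂ ⊆ B₃) (W : Set (Pt B₁)) :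
    extr (h₁₂.trans h₂₃) W = extr h₂₃ (extr h₁₂ W) :=
  rfl

theorem extr_iInter {ι : Sort*} (h : B₁ ⊆ B₂) (W : ι → Set (Pt B₁)) :
    extr h (⋂ i, W i) = ⋂ i, extr h (W i) :=
  Set.preimage_iInter

theorem proj_extr (h : B₁ ⊆ B₂) (W : Set (Pt B₁)) : proj h (extr h W) = W :=
  Set.image_preimage_eq W (projPt_surjective h)

end ProjExtr

/-- projecting an intersection of extrusions does not depend on whether
the extrusions are taken over the intermediate axis set `B` or a larger one `C`:
`P[B→A](⋂ⱼ E[Bⱼ→B](Sⱼ)) = P[C→A](⋂ⱼ E[Bⱼ→C](Sⱼ))`. -/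
theorem proj_iInter_extr_indep_of_ambient
    (A B C : Finset ℕ) (hAB : A ⊆ B) (hBC : B ⊆ C)
    (q : ℕ) (Bj : Fin q → Finset ℕ) (hBj : ∀ j, Bj j ⊆ B)
    (S : (j : Fin q) → Set (Pt (Bj j))) :
    proj hAB (⋂ j, extr (hBj j) (S j)) =
      proj (hAB.trans hBC) (⋂ j, extr ((hBj j).trans hBC) (S j)) := by
  rw [← proj_extr hBC (⋂ j, extr (hBj j) (S j)), ← proj_trans, extr_iInter]
  simp only [← extr_trans]
end

section
/- For the networked constrained system over horizon H, consider the distributed iteration on local sets: S_{kh,i}(0) := S_{kh,i}, and, with M_i² := ⋃_{j∈M_i} M_j, S_{kh,i}(κ+1) := the set of M_i-localizations of those M_i²-local trajectories whose M_j-localization lies in S_{kh,j}(κ) for every j ∈ M_i. Then: (a) for every κ ∈ ℕ, ⋂_{i=1}^N E_i(S_{kh,i}(κ)) = S̄_kh; (b) for every i and κ, P_i(S̄_kh) ⊆ S_{kh,i}(κ+1) ⊆ S_{kh,i}(κ); and (c) the family (P_i(S̄_kh))_{i=1,…,N} is a fixed point of this iteration, i.e., if the iteration is instead initialized with S_{kh,i}(0)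 = P_i(S̄_kh) for every i, then S_{kh,i}(κ) = P_i(S̄_kh) for every i and κ. -/
/-- An `A`-local trajectory over horizon data: for each agent `j ∈ A` and each time
`t ∈ ℕ`, a state in `Fin (n j) → ℝ` and an input in `Fin (m j) → ℝ`. -/
abbrev LTraj {N : ℕ} (n m : Fin N → ℕ) (A : Finset (Fin N)) : Type :=
  ((j : {j // j ∈ A}) → ℕ → (Fin (n j.1) → ℝ)) ×
  ((j : {j // j ∈ A}) → ℕ → (Fin (m j.1) → ℝ))

/-- A global trajectory: for each agent `j` and time `t`, a state and an input. -/
abbrev GTraj {N : ℕ} (n m : Fin N → ℕ) : Type :=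
  ((j : Fin N) → ℕ → (Fin (n j) → ℝ)) × ((j : Fin N) → ℕ → (Fin (m j) → ℝ))

/-- A vector assigning to each agent `j ∈ A` an element of `Fin (d j) → ℝ`
(e.g. a neighbourhood state or a neighbourhood input). -/
abbrev NVec {N : ℕ} (d : Fin N → ℕ) (A : Finset (Fin N)) : Type :=
  (j : {j // j ∈ A}) → Fin (d j.1) → ℝ

/-- The `A`-localization of a global trajectory. -/
def locG {N : ℕ} (n m : Fin N → ℕ) (A : Finset (Fin N)) (xu : GTraj n m) :
    LTraj n m A :=
  (fun j t => xu.1 j.1 t, fun j t => xu.2 j.1 t)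

/-- The `A`-localization of an `A'`-local trajectory, for `A ⊆ A'`. -/
def locL {N : ℕ} (n m : Fin N → ℕ) {A A' : Finset (Fin N)} (h : A ⊆ A')
    (yv : LTraj n m A') : LTraj n m A :=
  (fun j t => yv.1 ⟨j.1, h j.2⟩ t, fun j t => yv.2 ⟨j.1, h j.2⟩ t)

/-- A networked constrained system of `N` agents over horizon `H`. -/
structure NetSys (N : ℕ) where
  /-- state dimension of agent `i` -/
  n : Fin N → ℕ
  /-- input dimension of agent `i` -/
  m : Fin N → ℕ
  /-- the horizon -/
  H : ℕ
  /-- the neighbourhood of agent `i` -/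
  M : Fin N → Finset (Fin N)
  hself : ∀ i, i ∈ M i
  hsymm : ∀ i j, j ∈ M i ↔ i ∈ M j
  /-- dynamics of agent `i`, depending on the neighbourhood states and inputs -/
  f : (i : Fin N) → NVec n (M i) × NVec m (M i) → (Fin (n i) → ℝ)
  /-- joint (static) constraints of agent `i` on its neighbourhood states and inputs -/
  I : (i : Fin N) → Set (NVec n (M i) × NVec m (M i))
  /-- state constraint set of agent `i` -/
  X : (i : Fin N) → Set (Fin (n i) → ℝ)
  /-- input constraint set of agent `i` -/
  U : (i : Fin N) → Set (Fin (m i) → ℝ)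
  /-- starting neighbourhood-state set of agent `i` -/
  Sk : (i : Fin N) → Set (NVec n (M i))
  /-- transit neighbourhood-state set of agent `i` -/
  Pk : (i : Fin N) → Set (NVec n (M i))
  /-- terminal neighbourhood-state set of agent `i` -/
  Sh : (i : Fin N) → Set (NVec n (M i))
  hSkPk : ∀ i, Sk i ⊆ Pk i

namespace NetSys

variable {N : ℕ} (sys : NetSys N)

/-- The local solution set `S_{kh,i}` of agent `i`: the admissible `Mᵢ`-local
trajectories. -/
def localSol (i : Fin N) : Set (LTraj sys.n sys.m (sys.M i)) :=
  { yv |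
    (∀ t < sys.H,
        yv.1 ⟨i, sys.hself i⟩ (t + 1) = sys.f i (fun j => yv.1 j t, fun j => yv.2 j t) ∧
        (fun j => yv.1 j t, fun j => yv.2 j t) ∈ sys.I i) ∧
    (∀ t ≤ sys.H, yv.1 ⟨i, sys.hself i⟩ t ∈ sys.X i ∧ yv.2 ⟨i, sys.hself i⟩ t ∈ sys.U i) ∧
    (fun j => yv.1 j 0) ∈ sys.Sk i ∧
    (∀ t < sys.H, (fun j => yv.1 j t) ∈ sys.Pk i) ∧
    (fun j => yv.1 j sys.H) ∈ sys.Sh i }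

/-- The global solution set `S̄_kh`: the global trajectories satisfying every agent's
dynamics and constraints. -/
def globalSol : Set (GTraj sys.n sys.m) :=
  { xu | ∀ i : Fin N,
    (∀ t < sys.H,
        xu.1 i (t + 1) =
          sys.f i (fun j => xu.1 j.1 t, fun j => xu.2 j.1 t) ∧
        ((fun j => xu.1 j.1 t, fun j => xu.2 j.1 t) :
            NVec sys.n (sys.M i) × NVec sys.m (sys.M i)) ∈ sys.I i) ∧
    (∀ t ≤ sys.H, xu.1 i t ∈ sys.X i ∧ xu.2 i t ∈ sys.U i) ∧
    ((fun j => xu.1 j.1 0 : NVec sys.n (sys.M i)) ∈ sys.Sk i) ∧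
    (∀ t < sys.H, (fun j => xu.1 j.1 t : NVec sys.n (sys.M i)) ∈ sys.Pk i) ∧
    ((fun j => xu.1 j.1 sys.H : NVec sys.n (sys.M i)) ∈ sys.Sh i) }

/-- Extrusion `Eᵢ(W)`: the global trajectories whose `Mᵢ`-localization lies in `W`. -/
def E (i : Fin N) (W : Set (LTraj sys.n sys.m (sys.M i))) : Set (GTraj sys.n sys.m) :=
  { xu | locG sys.n sys.m (sys.M i) xu ∈ W }

/-- Localization `Pᵢ(V)`: the set of `Mᵢ`-localizations of the elements of `V`. -/
def P (i : Fin N) (V : Set (GTraj sys.n sys.m)) : Set (LTraj sys.n sys.m (sys.M i)) :=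
  locG sys.n sys.m (sys.M i) '' V

end NetSys

/-!
Each step of the distributed iteration replaces agent `i`'s set by the localizations of those
`Mᵢ²`-local trajectories that are admissible for every neighbour. A global trajectory lying in
every extrusion `E_j(S_j)` supplies such a trajectory (its own `Mᵢ²`-localization), so a step
never removes the localization of such a trajectory, while the `j = i` condition shows a step
never adds anything. Hence the intersection of the extrusions is invariant and equal to its
value `S̄_kh` at the start, and the family `Pᵢ(V)` of localizations of any set `V` of global
trajectories is a fixed point.
-/

namespace NetSys

variable {N : ℕ} (sys : NetSys N)

/-- One step `S_{kh,i}(κ) ↦ S_{kh,i}(κ+1)` of the distributed iteration. -/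
def step (T : (i : Fin N) → Set (LTraj sys.n sys.m (sys.M i))) (i : Fin N) :
    Set (LTraj sys.n sys.m (sys.M i)) :=
  locL sys.n sys.m (Finset.subset_biUnion_of_mem sys.M (sys.hself i)) ''
    { z : LTraj sys.n sys.m ((sys.M i).biUnion sys.M) |
      ∀ j : {j // j ∈ sys.M i},
        locL sys.n sys.m (Finset.subset_biUnion_of_mem sys.M j.2) z ∈ T j.1 }

theorem P_subset_iff {i : Fin N} {V : Set (GTraj sys.n sys.m)}
    {W : Set (LTraj sys.n sys.m (sys.M i))} : sys.P i V ⊆ W ↔ V ⊆ sys.E i W :=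
  Set.image_subset_iff

theorem iInter_E_localSol : ⋂ i, sys.E i (sys.localSol i) = sys.globalSol := by
  ext xu
  exact Set.mem_iInter

theorem step_subset (T : (i : Fin N) → Set (LTraj sys.n sys.m (sys.M i))) (i : Fin N) :
    sys.step T i ⊆ T i := by
  rintro _ ⟨z, hz, rfl⟩
  exact hz ⟨i, sys.hself i⟩

theorem mem_E_step {T : (i : Fin N) → Set (LTraj sys.n sys.m (sys.M i))}
    {xu : GTraj sys.n sys.m} (hxu : xu ∈ ⋂ j, sys.E j (T j)) (i : Fin N) :
    xu ∈ sys.E i (sys.step T i) :=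
  show locG sys.n sys.m (sys.M i) xu ∈ sys.step T i from
    ⟨locG sys.n sys.m ((sys.M i).biUnion sys.M) xu, fun j => Set.mem_iInter.mp hxu j.1, rfl⟩

theorem iInter_E_step (T : (i : Fin N) → Set (LTraj sys.n sys.m (sys.M i))) :
    ⋂ i, sys.E i (sys.step T i) = ⋂ i, sys.E i (T i) :=
  subset_antisymm
    (Set.iInter_mono fun i _ hxu => sys.step_subset T i hxu)
    (fun _ hxu => Set.mem_iInter.mpr (sys.mem_E_step hxu))

theorem step_P (V : Set (GTraj sys.n sys.m)) :
    sys.step (fun j => sys.P j V) = fun i => sys.P i V := by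
  funext i
  refine subset_antisymm (sys.step_subset _ i) (sys.P_subset_iff.mpr fun xu hxu => ?_)
  exact sys.mem_E_step (Set.mem_iInter.mpr fun j => sys.P_subset_iff.mp subset_rfl hxu) i

section Iteration

variable {sys} {T : (i : Fin N) → ℕ → Set (LTraj sys.n sys.m (sys.M i))}

theorem iInter_E_iterate
    (hT : ∀ (i : Fin N) (κ : ℕ), T i (κ + 1) = sys.step (fun j => T j κ) i) (κ : ℕ) :
    ⋂ i, sys.E i (T i κ) = ⋂ i, sys.E i (T i 0) := by
  induction κ with
  | zero => rfl
  | succ κ ih => simp only [hT, iInter_E_step, ih]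

theorem iterate_eq_P
    (hT : ∀ (i : Fin N) (κ : ℕ), T i (κ + 1) = sys.step (fun j => T j κ) i)
    {V : Set (GTraj sys.n sys.m)} (h0 : ∀ i, T i 0 = sys.P i V) (i : Fin N) (κ : ℕ) :
    T i κ = sys.P i V := by
  induction κ generalizing i with
  | zero => exact h0 i
  | succ κ ih => rw [hT, funext ih, step_P]

end Iteration

end NetSys

theorem NetSys.distributed_iteration_properties_general
    {N : ℕ} (sys : NetSys N)
    (S : (i : Fin N) → ℕ → Set (LTraj sys.n sys.m (sys.M i)))
    (hinit : ∀ i, S i 0 = sys.localSol i)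
    (hiter : ∀ (i : Fin N) (κ : ℕ), S i (κ + 1) =
      locL sys.n sys.m (Finset.subset_biUnion_of_mem sys.M (sys.hself i)) ''
        { z : LTraj sys.n sys.m ((sys.M i).biUnion sys.M) |
          ∀ j : {j // j ∈ sys.M i},
            locL sys.n sys.m (Finset.subset_biUnion_of_mem sys.M j.2) z ∈ S j.1 κ }) :
    (∀ κ : ℕ, (⋂ i, sys.E i (S i κ)) = sys.globalSol) ∧
    (∀ (i : Fin N) (κ : ℕ),
      sys.P i sys.globalSol ⊆ S i (κ + 1) ∧ S i (κ + 1) ⊆ S i κ) ∧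
    (∀ S' : (i : Fin N) → ℕ → Set (LTraj sys.n sys.m (sys.M i)),
      (∀ i, S' i 0 = sys.P i sys.globalSol) →
      (∀ (i : Fin N) (κ : ℕ), S' i (κ + 1) =
        locL sys.n sys.m (Finset.subset_biUnion_of_mem sys.M (sys.hself i)) ''
          { z : LTraj sys.n sys.m ((sys.M i).biUnion sys.M) |
            ∀ j : {j // j ∈ sys.M i},
              locL sys.n sys.m (Finset.subset_biUnion_of_mem sys.M j.2) z ∈ S' j.1 κ }) →
      ∀ (i : Fin N) (κ : ℕ), S' i κ = sys.P i sys.globalSol) := by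
  have ha : ∀ κ, ⋂ i, sys.E i (S i κ) = sys.globalSol := fun κ => by
    simp only [iInter_E_iterate hiter, hinit, iInter_E_localSol]
  refine ⟨ha, fun i κ => ⟨?_, ?_⟩, fun S' h0 h1 => iterate_eq_P h1 h0⟩
  · rw [P_subset_iff, ← ha (κ + 1)]
    exact Set.iInter_subset _ i
  · rw [hiter]
    exact sys.step_subset (fun j => S j κ) i

/-- Theorems 3 and Lemma 1/2 applied to the networked case: for the
distributed iteration on the local solution sets, (a) the intersection of the extrusions
is constantly the global solution set, (b) the iterates are nested and contain the
localizations of the global solution set, and (c) the localizations `Pᵢ(S̄_kh)` form a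
fixed point of the iteration. -/
theorem NetSys.distributed_iteration_properties
    {N : ℕ} (hN : 1 ≤ N) (sys : NetSys N) (hH : 1 ≤ sys.H)
    (S : (i : Fin N) → ℕ → Set (LTraj sys.n sys.m (sys.M i)))
    (hinit : ∀ i, S i 0 = sys.localSol i)
    (hiter : ∀ (i : Fin N) (κ : ℕ), S i (κ + 1) =
      locL sys.n sys.m (Finset.subset_biUnion_of_mem sys.M (sys.hself i)) ''
        { z : LTraj sys.n sys.m ((sys.M i).biUnion sys.M) |
          ∀ j : {j // j ∈ sys.M i},
            locL sys.n sys.m (Finset.subset_biUnion_of_mem sys.M j.2) z ∈ S j.1 κ }) :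
    (∀ κ : ℕ, (⋂ i, sys.E i (S i κ)) = sys.globalSol) ∧
    (∀ (i : Fin N) (κ : ℕ),
      sys.P i sys.globalSol ⊆ S i (κ + 1) ∧ S i (κ + 1) ⊆ S i κ) ∧
    (∀ S' : (i : Fin N) → ℕ → Set (LTraj sys.n sys.m (sys.M i)),
      (∀ i, S' i 0 = sys.P i sys.globalSol) →
      (∀ (i : Fin N) (κ : ℕ), S' i (κ + 1) =
        locL sys.n sys.m (Finset.subset_biUnion_of_mem sys.M (sys.hself i)) ''
          { z : LTraj sys.n sys.m ((sys.M i).biUnion sys.M) |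
            ∀ j : {j // j ∈ sys.M i},
              locL sys.n sys.m (Finset.subset_biUnion_of_mem sys.M j.2) z ∈ S' j.1 κ }) →
      ∀ (i : Fin N) (κ : ℕ), S' i κ = sys.P i sys.globalSol) :=
  NetSys.distributed_iteration_properties_general sys S hinit hiter
end
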